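/- arXiv:2101.01922 — 2 statements merged into one kernel-verified Lean document; each statement's English description precedes it below -/
import Mathlib

section
/- Let p ∈ (0,2]. If (M,d,μ) satisfies (D') with constants C₀ ≥ 1 and N > 0, then there is a constant C, depending only on p, C₀ and N, such that for every measurable function F : M × (0,∞) → [0,∞] one has ‖Ṽ(F)‖_{L^p(μ)} ≤ C ‖A(F)‖_{L^p(μ)}. -/
/-!
For `p = 2` the two sides agree: by Tonelli, `∫ A(F)²` integrates `F(y,t)² / (t μ(B(y,t)))`
against `μ {x | y ∈ B(x,t)} = μ(B(y,t))`.

For `p < 2` we run a good-λ argument. Let `G_λ = {A(F) > λ}` and let `O_λ` be the set where the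
maximal function of `1_{G_λ}` exceeds `1/2`. The Vitali covering lemma and (D') at scale `5` give
`μ(O_λ) ≤ 2 C₀ 5^N μ(G_λ)`. Off `O_λ`, every ball `B(x,t)` has at least half of its measure
outside `G_λ`, so the same Tonelli computation gives `∫_{O_λᶜ} Ṽ(F)² ≤ 2 ∫_{A(F) ≤ λ} A(F)²`.
Chebyshev then bounds `μ{Ṽ(F) > λ}`, and integrating against `p λ^{p-1} dλ` (layer cake) gives
`‖Ṽ(F)‖_p^p ≤ (2 C₀ 5^N + 2p/(2-p)) ‖A(F)‖_p^p`.
-/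

open MeasureTheory Metric Set ENNReal

section LayerCake

variable {p : ℝ}

theorem lintegral_Ioo_ofReal_mul_rpow_sub_one (hp : 0 < p) {v : ℝ} (hv : 0 ≤ v) :
    ∫⁻ l in Ioo 0 v, ENNReal.ofReal (p * l ^ (p - 1)) = ENNReal.ofReal (v ^ p) := by
  have hint : IntervalIntegrable (fun l : ℝ => p * l ^ (p - 1)) volume 0 v :=
    (intervalIntegral.intervalIntegrable_rpow' (by linarith)).const_mul p
  rw [← ofReal_integral_eq_lintegral_ofReal
      ((intervalIntegrable_iff_integrableOn_Ioc_of_le hv).mp hint |>.mono_set Ioo_subset_Ioc_self)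
      (ae_restrict_of_forall_mem measurableSet_Ioo fun l hl => by
        have := hl.1; positivity),
    ← integral_Ioc_eq_integral_Ioo, ← intervalIntegral.integral_of_le hv,
    intervalIntegral.integral_const_mul, integral_rpow (Or.inl (by linarith)),
    sub_add_cancel, Real.zero_rpow hp.ne', sub_zero, mul_div_cancel₀ _ hp.ne']

theorem lintegral_Ioi_ofReal_mul_rpow_sub_one (hp : 0 < p) :
    ∫⁻ l in Ioi 0, ENNReal.ofReal (p * l ^ (p - 1)) = ∞ := by
  refine ENNReal.eq_top_of_forall_nnreal_le fun r => ?_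
  have hv : (0 : ℝ) ≤ ((r : ℝ) + 1) ^ p⁻¹ := by positivity
  calc (r : ℝ≥0∞) ≤ ENNReal.ofReal ((((r : ℝ) + 1) ^ p⁻¹) ^ p) := by
        rw [Real.rpow_inv_rpow (by positivity) hp.ne', ← ENNReal.ofReal_coe_nnreal]
        exact ENNReal.ofReal_le_ofReal (by linarith)
    _ = ∫⁻ l in Ioo 0 (((r : ℝ) + 1) ^ p⁻¹), ENNReal.ofReal (p * l ^ (p - 1)) :=
        (lintegral_Ioo_ofReal_mul_rpow_sub_one hp hv).symm
    _ ≤ _ := lintegral_mono_set Ioo_subset_Ioi_self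

theorem setLIntegral_ofReal_mul_rpow_sub_one_ofReal_lt (hp : 0 < p) (c : ℝ≥0∞) :
    ∫⁻ l in {l | ENNReal.ofReal l < c} ∩ Ioi 0, ENNReal.ofReal (p * l ^ (p - 1)) = c ^ p := by
  rcases eq_or_ne c ∞ with rfl | hc
  · simp only [ofReal_lt_top, ofPred_true, univ_inter]
    rw [lintegral_Ioi_ofReal_mul_rpow_sub_one hp, top_rpow_of_pos hp]
  · have hset : {l | ENNReal.ofReal l < c} ∩ Ioi 0 = Ioo 0 c.toReal := by
      ext l
      simp only [mem_inter_iff, mem_Ioi, mem_ofPred_eq, mem_Ioo,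
        and_comm (a := ENNReal.ofReal l < c), and_congr_right_iff]
      exact fun hl => ENNReal.ofReal_lt_iff_lt_toReal hl.le hc
    rw [hset, lintegral_Ioo_ofReal_mul_rpow_sub_one hp toReal_nonneg,
      ← ENNReal.ofReal_rpow_of_nonneg toReal_nonneg hp.le, ofReal_toReal hc]

theorem lintegral_Ioi_ofReal_rpow_of_lt {r : ℝ} (hr : r < -1) {a : ℝ} (ha : 0 < a) :
    ∫⁻ l in Ioi a, ENNReal.ofReal (l ^ r) = ENNReal.ofReal (-a ^ (r + 1) / (r + 1)) := by
  rw [← ofReal_integral_eq_lintegral_ofReal (integrableOn_Ioi_rpow_of_lt hr ha)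
      (ae_restrict_of_forall_mem measurableSet_Ioi fun l hl => by
        have : 0 < l := ha.trans hl; positivity),
    integral_Ioi_rpow_of_lt hr ha]

theorem lintegral_rpow_eq_lintegral_mul_meas_lt {α : Type*} [MeasurableSpace α] (μ : Measure α)
    [SFinite μ] (hp : 0 < p) {f : α → ℝ≥0∞} (hf : Measurable f) :
    ∫⁻ x, f x ^ p ∂μ
      = ∫⁻ l in Ioi 0, ENNReal.ofReal (p * l ^ (p - 1)) * μ {x | ENNReal.ofReal l < f x} := by
  set E : Set (ℝ × α) := {q | ENNReal.ofReal q.1 < f q.2}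
  set w : ℝ → ℝ≥0∞ := fun l => ENNReal.ofReal (p * l ^ (p - 1))
  have hK : Measurable (E.indicator fun q => w q.1) :=
    Measurable.indicator (by fun_prop) (measurableSet_lt (by fun_prop) (hf.comp measurable_snd))
  calc ∫⁻ x, f x ^ p ∂μ = ∫⁻ x, (∫⁻ l in Ioi 0, E.indicator (fun q => w q.1) (l, x)) ∂μ := by
        refine lintegral_congr fun x => ?_
        have hmeas : MeasurableSet {l | ENNReal.ofReal l < f x} :=
          measurableSet_lt (by fun_prop) measurable_const
        rw [← setLIntegral_ofReal_mul_rpow_sub_one_ofReal_lt hp (f x),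
          ← Measure.restrict_restrict hmeas, ← lintegral_indicator hmeas]
        rfl
    _ = ∫⁻ l in Ioi 0, ∫⁻ x, E.indicator (fun q => w q.1) (l, x) ∂μ :=
        lintegral_lintegral_swap (f := fun x l => E.indicator (fun q => w q.1) (l, x))
          (hK.comp measurable_swap).aemeasurable
    _ = _ := by
        refine lintegral_congr fun l => ?_
        rw [← lintegral_indicator_const (measurableSet_lt measurable_const hf)]
        rfl

theorem sq_mul_setLIntegral_ofReal_mul_rpow_div_sq_le (hp0 : 0 < p) (hp2 : p < 2) (s : ℝ≥0∞) :
    s ^ 2 * ∫⁻ l in {l | s ≤ ENNReal.ofReal l} ∩ Ioi 0,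
        ENNReal.ofReal (p * l ^ (p - 1)) / ENNReal.ofReal l ^ 2
      ≤ ENNReal.ofReal (p / (2 - p)) * s ^ p := by
  rcases eq_or_ne s ∞ with rfl | hs
  · simp [top_le_iff]
  rcases eq_or_ne s 0 with rfl | hs0
  · simp
  obtain ⟨r, hr, rfl⟩ : ∃ r, 0 < r ∧ s = ENNReal.ofReal r :=
    ⟨s.toReal, toReal_pos hs0 hs, (ofReal_toReal hs).symm⟩
  have hset : {l | ENNReal.ofReal r ≤ ENNReal.ofReal l} ∩ Ioi 0 = Ici r := by
    ext l
    simp only [mem_inter_iff, mem_ofPred_eq, mem_Ioi, mem_Ici]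
    exact ⟨fun h => (ENNReal.ofReal_le_ofReal_iff h.2.le).mp h.1,
      fun h => ⟨ENNReal.ofReal_le_ofReal h, hr.trans_le h⟩⟩
  have hweight : ∀ l ∈ Ioi r, ENNReal.ofReal (p * l ^ (p - 1)) / ENNReal.ofReal l ^ 2
      = ENNReal.ofReal p * ENNReal.ofReal (l ^ (p - 3)) := by
    intro l hl
    have hl0 : 0 < l := hr.trans hl
    rw [← ENNReal.ofReal_pow hl0.le, ← ENNReal.ofReal_div_of_pos (by positivity),
      ← ENNReal.ofReal_mul hp0.le, mul_div_assoc, ← Real.rpow_natCast,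
      ← Real.rpow_sub hl0]
    ring_nf
  rw [hset, Measure.restrict_congr_set Ioi_ae_eq_Ici.symm,
    setLIntegral_congr_fun measurableSet_Ioi hweight, lintegral_const_mul' _ _ ofReal_ne_top,
    lintegral_Ioi_ofReal_rpow_of_lt (by linarith) hr, ← ENNReal.ofReal_pow hr.le,
    ENNReal.ofReal_rpow_of_nonneg hr.le hp0.le,
    ← ENNReal.ofReal_mul hp0.le, ← ENNReal.ofReal_mul (by positivity),
    ← ENNReal.ofReal_mul (div_nonneg hp0.le (by linarith))]
  refine le_of_eq (congrArg ENNReal.ofReal ?_)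
  have hpow : r ^ 2 * r ^ (p - 3 + 1) = r ^ p := by
    rw [← Real.rpow_natCast, ← Real.rpow_add hr]; ring_nf
  rw [← hpow, neg_div, ← div_neg, show -(p - 3 + 1) = 2 - p by ring]
  ring

theorem lintegral_mul_setLIntegral_sq_div_le {α : Type*} [MeasurableSpace α] (μ : Measure α)
    [SFinite μ] (hp0 : 0 < p) (hp2 : p < 2) {a : α → ℝ≥0∞} (ha : Measurable a) :
    ∫⁻ l in Ioi 0, ENNReal.ofReal (p * l ^ (p - 1)) *
        ((∫⁻ x in {x | a x ≤ ENNReal.ofReal l}, a x ^ 2 ∂μ) / ENNReal.ofReal l ^ 2)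
      ≤ ENNReal.ofReal (p / (2 - p)) * ∫⁻ x, a x ^ p ∂μ := by
  set T : Set (ℝ × α) := {q | a q.2 ≤ ENNReal.ofReal q.1}
  set w : ℝ → ℝ≥0∞ := fun l => ENNReal.ofReal (p * l ^ (p - 1)) / ENNReal.ofReal l ^ 2
  have hT : MeasurableSet T := measurableSet_le (ha.comp measurable_snd) (by fun_prop)
  have hK : Measurable (T.indicator fun q => w q.1 * a q.2 ^ 2) :=
    Measurable.indicator (by fun_prop) hT
  calc ∫⁻ l in Ioi 0, ENNReal.ofReal (p * l ^ (p - 1)) *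
        ((∫⁻ x in {x | a x ≤ ENNReal.ofReal l}, a x ^ 2 ∂μ) / ENNReal.ofReal l ^ 2)
      = ∫⁻ l in Ioi 0, ∫⁻ x, T.indicator (fun q => w q.1 * a q.2 ^ 2) (l, x) ∂μ := by
        refine lintegral_congr fun l => ?_
        have hmeas := measurableSet_le ha (measurable_const (a := ENNReal.ofReal l))
        rw [← lintegral_indicator hmeas, ← mul_div_assoc, div_eq_mul_inv, mul_right_comm,
          ← div_eq_mul_inv,
          ← lintegral_const_mul _ ((ha.pow_const 2).indicator hmeas)]
        refine lintegral_congr fun x => ?_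
        exact (indicator_mul_right _ (fun _ => w l) _).symm
    _ = ∫⁻ x, (∫⁻ l in Ioi 0, T.indicator (fun q => w q.1 * a q.2 ^ 2) (l, x)) ∂μ :=
        lintegral_lintegral_swap (f := fun l x => T.indicator (fun q => w q.1 * a q.2 ^ 2) (l, x))
          hK.aemeasurable
    _ = ∫⁻ x, a x ^ 2 * (∫⁻ l in {l | a x ≤ ENNReal.ofReal l} ∩ Ioi 0, w l) ∂μ := by
        refine lintegral_congr fun x => ?_
        have hmeas : MeasurableSet {l | a x ≤ ENNReal.ofReal l} :=
          measurableSet_le measurable_const ENNReal.measurable_ofReal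
        rw [← Measure.restrict_restrict hmeas, ← lintegral_indicator hmeas,
          ← lintegral_const_mul _ ((by fun_prop : Measurable w).indicator hmeas)]
        refine lintegral_congr fun l => ?_
        rw [mul_comm]
        exact indicator_mul_left {l | a x ≤ ENNReal.ofReal l} w fun _ => a x ^ 2
    _ ≤ ∫⁻ x, ENNReal.ofReal (p / (2 - p)) * a x ^ p ∂μ :=
        lintegral_mono fun x => sq_mul_setLIntegral_ofReal_mul_rpow_div_sq_le hp0 hp2 (a x)
    _ = _ := lintegral_const_mul' _ _ ofReal_ne_top

end LayerCake

section GoodLambda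

variable {α : Type*} [MeasurableSpace α] {μ : Measure α} {p : ℝ}

theorem meas_lt_le_of_setLIntegral_compl_le {v a : α → ℝ≥0∞} (hv : Measurable v)
    {K B : ℝ≥0∞} {l : ℝ} (hl : 0 < l) {O : Set α}
    (hO : μ O ≤ K * μ {x | ENNReal.ofReal l < a x})
    (hOc : ∫⁻ x in Oᶜ, v x ^ 2 ∂μ ≤ B * ∫⁻ x in {x | a x ≤ ENNReal.ofReal l}, a x ^ 2 ∂μ) :
    μ {x | ENNReal.ofReal l < v x}
      ≤ K * μ {x | ENNReal.ofReal l < a x}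
        + B * ((∫⁻ x in {x | a x ≤ ENNReal.ofReal l}, a x ^ 2 ∂μ) / ENNReal.ofReal l ^ 2) := by
  have hsq : {x | ENNReal.ofReal l < v x} ⊆ {x | ENNReal.ofReal l ^ 2 ≤ v x ^ 2} :=
    fun x (hx : ENNReal.ofReal l < v x) => pow_le_pow_left' hx.le 2
  have hmarkov : μ ({x | ENNReal.ofReal l < v x} \ O)
      ≤ (∫⁻ x in Oᶜ, v x ^ 2 ∂μ) / ENNReal.ofReal l ^ 2 := by
    rw [sdiff_eq, ← Measure.restrict_apply (measurableSet_lt measurable_const hv)]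
    exact (measure_mono hsq).trans (meas_ge_le_lintegral_div (hv.pow_const 2).aemeasurable
      (by positivity) (pow_ne_top ofReal_ne_top))
  calc μ {x | ENNReal.ofReal l < v x}
      ≤ μ O + μ ({x | ENNReal.ofReal l < v x} \ O) := tsub_le_iff_left.1 le_measure_sdiff
    _ ≤ _ := add_le_add hO (hmarkov.trans (by
        rw [← mul_div_assoc]; exact ENNReal.div_le_div_right hOc _))

theorem lintegral_rpow_le_of_forall_exists_good_set [SFinite μ] (hp0 : 0 < p) (hp2 : p < 2)
    {v a : α → ℝ≥0∞} (hv : Measurable v) (ha : Measurable a) (K B : ℝ≥0∞)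
    (h : ∀ l : ℝ, 0 < l → ∃ O : Set α, μ O ≤ K * μ {x | ENNReal.ofReal l < a x} ∧
      ∫⁻ x in Oᶜ, v x ^ 2 ∂μ ≤ B * ∫⁻ x in {x | a x ≤ ENNReal.ofReal l}, a x ^ 2 ∂μ) :
    ∫⁻ x, v x ^ p ∂μ ≤ (K + B * ENNReal.ofReal (p / (2 - p))) * ∫⁻ x, a x ^ p ∂μ := by
  set w : ℝ → ℝ≥0∞ := fun l => ENNReal.ofReal (p * l ^ (p - 1))
  have hdist : Measurable fun l : ℝ => w l * μ {x | ENNReal.ofReal l < a x} := by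
    have : Antitone fun l : ℝ => μ {x | ENNReal.ofReal l < a x} :=
      fun l l' hll' => measure_mono fun x hx => (ENNReal.ofReal_le_ofReal hll').trans_lt hx
    exact (by fun_prop : Measurable w).mul this.measurable
  have htail : Measurable fun l : ℝ =>
      w l * ((∫⁻ x in {x | a x ≤ ENNReal.ofReal l}, a x ^ 2 ∂μ) / ENNReal.ofReal l ^ 2) := by
    have : Monotone fun l : ℝ => ∫⁻ x in {x | a x ≤ ENNReal.ofReal l}, a x ^ 2 ∂μ :=
      fun l l' hll' => lintegral_mono_set fun x (hx : a x ≤ _) =>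
        hx.trans (ENNReal.ofReal_le_ofReal hll')
    exact (by fun_prop : Measurable w).mul (this.measurable.div (by fun_prop))
  calc ∫⁻ x, v x ^ p ∂μ = ∫⁻ l in Ioi 0, w l * μ {x | ENNReal.ofReal l < v x} :=
        lintegral_rpow_eq_lintegral_mul_meas_lt μ hp0 hv
    _ ≤ ∫⁻ l in Ioi 0, (K * (w l * μ {x | ENNReal.ofReal l < a x}) + B * (w l *
          ((∫⁻ x in {x | a x ≤ ENNReal.ofReal l}, a x ^ 2 ∂μ) / ENNReal.ofReal l ^ 2))) := by
        refine lintegral_mono_ae ((ae_restrict_mem measurableSet_Ioi).mono fun l hl => ?_)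
        obtain ⟨O, hO, hOc⟩ := h l hl
        calc w l * μ {x | ENNReal.ofReal l < v x} ≤ w l * _ :=
              mul_le_mul_right (meas_lt_le_of_setLIntegral_compl_le hv hl hO hOc) _
          _ = _ := by ring
    _ = K * (∫⁻ l in Ioi 0, w l * μ {x | ENNReal.ofReal l < a x}) + B * ∫⁻ l in Ioi 0, w l *
          ((∫⁻ x in {x | a x ≤ ENNReal.ofReal l}, a x ^ 2 ∂μ) / ENNReal.ofReal l ^ 2) := by
        rw [lintegral_add_left (hdist.const_mul K), lintegral_const_mul _ hdist,
          lintegral_const_mul _ htail]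
    _ ≤ K * ∫⁻ x, a x ^ p ∂μ + B * (ENNReal.ofReal (p / (2 - p)) * ∫⁻ x, a x ^ p ∂μ) := by
        rw [← lintegral_rpow_eq_lintegral_mul_meas_lt μ hp0 ha]
        gcongr
        exact lintegral_mul_setLIntegral_sq_div_le μ hp0 hp2 ha
    _ = _ := by ring

end GoodLambda

theorem ENNReal.div_eq_div_mul_mul {a b c : ℝ≥0∞} (hc0 : c ≠ 0) (hc : c ≠ ∞) :
    a / b = a / (b * c) * c := by
  rw [← ENNReal.mul_div_mul_right a b hc0 hc, ENNReal.mul_div_right_comm]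

theorem lintegral_lintegral_lintegral_comm {α β γ : Type*} [MeasurableSpace α]
    [MeasurableSpace β] [MeasurableSpace γ] {μ : Measure α} {ν : Measure β} {ρ : Measure γ}
    [SFinite μ] [SFinite ν] [SFinite ρ] {f : α → β → γ → ℝ≥0∞}
    (hf : Measurable fun q : α × β × γ => f q.1 q.2.1 q.2.2) :
    ∫⁻ a, ∫⁻ b, ∫⁻ c, f a b c ∂ρ ∂ν ∂μ = ∫⁻ c, ∫⁻ b, ∫⁻ a, f a b c ∂μ ∂ν ∂ρ := by
  calc ∫⁻ a, ∫⁻ b, ∫⁻ c, f a b c ∂ρ ∂ν ∂μ = ∫⁻ a, ∫⁻ c, ∫⁻ b, f a b c ∂ν ∂ρ ∂μ :=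
        lintegral_congr fun a => lintegral_lintegral_swap (by fun_prop)
    _ = ∫⁻ c, ∫⁻ a, ∫⁻ b, f a b c ∂ν ∂μ ∂ρ := lintegral_lintegral_swap (by fun_prop)
    _ = ∫⁻ c, ∫⁻ b, ∫⁻ a, f a b c ∂μ ∂ν ∂ρ :=
        lintegral_congr fun c => lintegral_lintegral_swap (by fun_prop)

section BallFubini

variable {M : Type*} [PseudoMetricSpace M] [MeasurableSpace M] [OpensMeasurableSpace M]
  [SecondCountableTopology M]

theorem lintegral_lintegral_mul_measure_ball (μ ν : Measure M) [SFinite μ] [SFinite ν]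
    (τ : Measure ℝ) [SFinite τ] {g : M → ℝ → ℝ≥0∞} (hg : Measurable (Function.uncurry g)) :
    ∫⁻ x, ∫⁻ t, g x t * ν (ball x t) ∂τ ∂μ = ∫⁻ y, ∫⁻ t, ∫⁻ x in ball y t, g x t ∂μ ∂τ ∂ν := by
  have hmeas : Measurable fun q : M × ℝ × M =>
      (ball q.1 q.2.1).indicator (fun _ => g q.1 q.2.1) q.2.2 :=
    (hg.comp (by fun_prop : Measurable fun q : M × ℝ × M => (q.1, q.2.1))).indicator
      (isOpen_lt (by fun_prop) (by fun_prop)).measurableSet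
  have hswap : ∀ x t y, (ball x t).indicator (fun _ => g x t) y
      = (ball y t).indicator (fun x => g x t) x := by
    intro x t y
    by_cases h : y ∈ ball x t
    · rw [indicator_of_mem h, indicator_of_mem (mem_ball_comm.mp h)]
    · rw [indicator_of_notMem h, indicator_of_notMem (mt mem_ball_comm.mp h)]
  calc ∫⁻ x, ∫⁻ t, g x t * ν (ball x t) ∂τ ∂μ
      = ∫⁻ x, ∫⁻ t, ∫⁻ y, (ball x t).indicator (fun _ => g x t) y ∂ν ∂τ ∂μ := by
        simp_rw [lintegral_indicator_const measurableSet_ball]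
    _ = ∫⁻ y, ∫⁻ t, ∫⁻ x, (ball x t).indicator (fun _ => g x t) y ∂μ ∂τ ∂ν :=
        lintegral_lintegral_lintegral_comm hmeas
    _ = _ := by
        simp_rw [hswap, lintegral_indicator measurableSet_ball]

theorem measurable_measure_ball (μ : Measure M) [SFinite μ] :
    Measurable fun q : M × ℝ => μ (ball q.1 q.2) :=
  measurable_measure_prodMk_left (s := {q : (M × ℝ) × M | dist q.2 q.1.1 < q.1.2})
    (isOpen_lt (by fun_prop) (by fun_prop)).measurableSet

theorem measurable_setLIntegral_ball (μ : Measure M) [SFinite μ] {g : M → ℝ → ℝ≥0∞}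
    (hg : Measurable (Function.uncurry g)) :
    Measurable fun q : M × ℝ => ∫⁻ y in ball q.1 q.2, g y q.2 ∂μ := by
  have hmeas : Measurable fun r : (M × ℝ) × M =>
      (ball r.1.1 r.1.2).indicator (fun y => g y r.1.2) r.2 :=
    (hg.comp (by fun_prop : Measurable fun r : (M × ℝ) × M => (r.2, r.1.2))).indicator
      (isOpen_lt (by fun_prop) (by fun_prop)).measurableSet
  simp_rw [← lintegral_indicator measurableSet_ball]
  exact hmeas.lintegral_prod_right'

end BallFubini

section HalfDenseSet

variable {M : Type*} [PseudoMetricSpace M] [MeasurableSpace M]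

/-- `{x | M 1_S (x) > 1/2}` for the centred maximal function `M`, written without division. -/
def halfDenseSet (μ : Measure M) (S : Set M) : Set M :=
  {x | ∃ r, 0 < r ∧ μ (ball x r) < 2 * μ (S ∩ ball x r)}

theorem measure_ball_le_two_mul_measure_ball_sdiff {μ : Measure M} {S : Set M}
    (hS : MeasurableSet S) {x : M} (hx : x ∉ halfDenseSet μ S) {t : ℝ} (ht : 0 < t)
    (hfin : μ (ball x t) ≠ ∞) :
    μ (ball x t) ≤ 2 * μ (ball x t \ S) := by
  have hhalf : 2 * μ (ball x t ∩ S) ≤ μ (ball x t) := by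
    rw [inter_comm]; exact not_lt.mp fun h => hx ⟨t, ht, h⟩
  refine ENNReal.le_of_add_le_add_left hfin ?_
  calc μ (ball x t) + μ (ball x t) = 2 * μ (ball x t ∩ S) + 2 * μ (ball x t \ S) := by
        rw [← mul_add, measure_inter_add_sdiff _ hS, two_mul]
    _ ≤ μ (ball x t) + 2 * μ (ball x t \ S) := by gcongr

variable [OpensMeasurableSpace M] [SecondCountableTopology M]

theorem measure_setOf_exists_le_lt_two_mul_le {μ : Measure M} {K : ℝ≥0∞}
    (hK : ∀ x r, 0 < r → μ (ball x (5 * r)) ≤ K * μ (ball x r)) {S : Set M}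
    (hS : MeasurableSet S) (R : ℝ) :
    μ {x | ∃ r, 0 < r ∧ r ≤ R ∧ μ (ball x r) < 2 * μ (S ∩ ball x r)} ≤ 2 * K * μ S := by
  set O := {x | ∃ r, 0 < r ∧ r ≤ R ∧ μ (ball x r) < 2 * μ (S ∩ ball x r)}
  choose! r hr using fun x (hx : x ∈ O) => hx
  obtain ⟨u, huO, hdisj, hcov⟩ := Vitali.exists_disjoint_subfamily_covering_enlargement_closedBall
    O id r R (fun x hx => (hr x hx).2.1) 4 (by norm_num)
  have hu : u.Countable :=
    (hdisj.mono fun _ => ball_subset_closedBall).countable_of_isOpen (fun _ _ => isOpen_ball)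
      fun x hx => nonempty_ball.2 (hr x (huO hx)).1
  have hcover : O ⊆ ⋃ b ∈ u, ball b (5 * r b) := by
    intro a ha
    obtain ⟨b, hb, hab⟩ := hcov a ha
    exact mem_biUnion hb (closedBall_subset_ball (by linarith [(hr b (huO hb)).1])
      (hab (mem_closedBall_self (hr a ha).1.le)))
  calc μ O ≤ μ (⋃ b ∈ u, ball b (5 * r b)) := measure_mono hcover
    _ ≤ ∑' b : u, μ (ball (b : M) (5 * r b)) := measure_biUnion_le μ hu _
    _ ≤ ∑' b : u, 2 * K * μ (S ∩ ball (b : M) (r b)) := by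
        refine ENNReal.tsum_le_tsum fun b => ?_
        obtain ⟨hrb, -, hdense⟩ := hr b (huO b.2)
        calc μ (ball (b : M) (5 * r b)) ≤ K * μ (ball (b : M) (r b)) := hK b (r b) hrb
          _ ≤ K * (2 * μ (S ∩ ball (b : M) (r b))) := by gcongr
          _ = _ := by ring
    _ = 2 * K * μ (⋃ b ∈ u, S ∩ ball b (r b)) := by
        rw [ENNReal.tsum_mul_left, measure_biUnion (f := fun b => S ∩ ball b (r b)) hu
          (hdisj.mono fun _ => inter_subset_right.trans ball_subset_closedBall)
          fun _ _ => hS.inter measurableSet_ball]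
    _ ≤ 2 * K * μ S := by gcongr; exact iUnion₂_subset fun _ _ => inter_subset_left

theorem measure_halfDenseSet_le {μ : Measure M} {K : ℝ≥0∞}
    (hK : ∀ x r, 0 < r → μ (ball x (5 * r)) ≤ K * μ (ball x r)) {S : Set M}
    (hS : MeasurableSet S) : μ (halfDenseSet μ S) ≤ 2 * K * μ S := by
  have hunion : halfDenseSet μ S
      = ⋃ R : ℕ, {x | ∃ r : ℝ, 0 < r ∧ r ≤ R ∧ μ (ball x r) < 2 * μ (S ∩ ball x r)} := by
    ext x
    simp only [halfDenseSet, mem_ofPred_eq, mem_iUnion]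
    exact ⟨fun ⟨r, hr, h⟩ => ⟨⌈r⌉₊, r, hr, Nat.le_ceil r, h⟩, fun ⟨_, r, hr, _, h⟩ => ⟨r, hr, h⟩⟩
  have hmono : Monotone fun R : ℕ =>
      {x | ∃ r : ℝ, 0 < r ∧ r ≤ R ∧ μ (ball x r) < 2 * μ (S ∩ ball x r)} :=
    fun R R' hRR' x ⟨r, hr, hrR, h⟩ => ⟨r, hr, hrR.trans (Nat.cast_le.mpr hRR'), h⟩
  rw [hunion, hmono.measure_iUnion]
  exact iSup_le fun R => measure_setOf_exists_le_lt_two_mul_le hK hS R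

end HalfDenseSet

section SquareFunctions

variable {M : Type*} [MeasurableSpace M] {F : M → ℝ → ℝ≥0∞}

/-- `Ṽ(F)(x)²`. -/
noncomputable def verticalSq (F : M → ℝ → ℝ≥0∞) (x : M) : ℝ≥0∞ :=
  ∫⁻ t in Ioi 0, F x t ^ 2 / ENNReal.ofReal t

theorem measurable_verticalSq (hF : Measurable (Function.uncurry F)) :
    Measurable (verticalSq F) :=
  Measurable.lintegral_prod_right' (f := fun q : M × ℝ => F q.1 q.2 ^ 2 / ENNReal.ofReal q.2)
    (by fun_prop)

variable [PseudoMetricSpace M]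

/-- `A(F)(x)²`. -/
noncomputable def conicalSq (μ : Measure M) (F : M → ℝ → ℝ≥0∞) (x : M) : ℝ≥0∞ :=
  ∫⁻ t in Ioi 0, ∫⁻ y in ball x t, F y t ^ 2 / (ENNReal.ofReal t * μ (ball y t)) ∂μ

variable [OpensMeasurableSpace M] [SecondCountableTopology M] {μ : Measure M} [SFinite μ]

theorem measurable_conicalWeight (hF : Measurable (Function.uncurry F)) :
    Measurable (Function.uncurry fun y t => F y t ^ 2 / (ENNReal.ofReal t * μ (ball y t))) :=
  (hF.pow_const 2).div ((by fun_prop : Measurable fun q : M × ℝ => ENNReal.ofReal q.2).mul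
    (measurable_measure_ball μ))

theorem measurable_conicalSq (hF : Measurable (Function.uncurry F)) :
    Measurable (conicalSq μ F) :=
  (measurable_setLIntegral_ball μ (measurable_conicalWeight hF)).lintegral_prod_right'

theorem lintegral_lintegral_mul_measure_ball_eq_lintegral_conicalSq (ν : Measure M) [SFinite ν]
    (hF : Measurable (Function.uncurry F)) :
    ∫⁻ x, (∫⁻ t in Ioi 0, F x t ^ 2 / (ENNReal.ofReal t * μ (ball x t)) * ν (ball x t)) ∂μ
      = ∫⁻ y, conicalSq μ F y ∂ν :=
  lintegral_lintegral_mul_measure_ball μ ν _ (measurable_conicalWeight hF)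

theorem lintegral_verticalSq_eq_lintegral_conicalSq
    (hball : ∀ x r, 0 < r → 0 < μ (ball x r) ∧ μ (ball x r) < ∞)
    (hF : Measurable (Function.uncurry F)) :
    ∫⁻ x, verticalSq F x ∂μ = ∫⁻ x, conicalSq μ F x ∂μ := by
  rw [← lintegral_lintegral_mul_measure_ball_eq_lintegral_conicalSq μ hF]
  exact lintegral_congr fun x => setLIntegral_congr_fun measurableSet_Ioi fun t ht =>
    ENNReal.div_eq_div_mul_mul (hball x t ht).1.ne' (hball x t ht).2.ne

theorem setLIntegral_compl_halfDenseSet_verticalSq_le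
    (hball : ∀ x r, 0 < r → 0 < μ (ball x r) ∧ μ (ball x r) < ∞)
    (hF : Measurable (Function.uncurry F)) {S : Set M} (hS : MeasurableSet S) :
    ∫⁻ x in (halfDenseSet μ S)ᶜ, verticalSq F x ∂μ ≤ 2 * ∫⁻ x in Sᶜ, conicalSq μ F x ∂μ := by
  set g : M → ℝ → ℝ≥0∞ := fun x t => F x t ^ 2 / (ENNReal.ofReal t * μ (ball x t))
  have hmeas : Measurable fun x => ∫⁻ t in Ioi 0, g x t * μ.restrict Sᶜ (ball x t) :=
    Measurable.lintegral_prod_right' ((measurable_conicalWeight hF).mul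
      (measurable_measure_ball (μ.restrict Sᶜ)))
  calc ∫⁻ x in (halfDenseSet μ S)ᶜ, verticalSq F x ∂μ
      ≤ ∫⁻ x in (halfDenseSet μ S)ᶜ,
          2 * (∫⁻ t in Ioi 0, g x t * μ.restrict Sᶜ (ball x t)) ∂μ := by
        refine setLIntegral_mono (hmeas.const_mul 2) fun x hx => ?_
        rw [verticalSq, ← lintegral_const_mul' _ _ ofNat_ne_top]
        refine setLIntegral_mono' measurableSet_Ioi fun t ht => ?_
        rw [ENNReal.div_eq_div_mul_mul (hball x t ht).1.ne' (hball x t ht).2.ne,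
          Measure.restrict_apply measurableSet_ball, mul_left_comm]
        gcongr
        exact measure_ball_le_two_mul_measure_ball_sdiff hS hx ht (hball x t ht).2.ne
    _ ≤ 2 * ∫⁻ x, (∫⁻ t in Ioi 0, g x t * μ.restrict Sᶜ (ball x t)) ∂μ := by
        rw [← lintegral_const_mul' _ _ ofNat_ne_top]
        exact setLIntegral_le_lintegral _ _
    _ = 2 * ∫⁻ x in Sᶜ, conicalSq μ F x ∂μ := by
        rw [lintegral_lintegral_mul_measure_ball_eq_lintegral_conicalSq _ hF]

end SquareFunctions

section Conclusion

variable {M : Type*} [PseudoMetricSpace M] [MeasurableSpace M] [OpensMeasurableSpace M]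
  [SecondCountableTopology M] {μ : Measure M} [SFinite μ] {F : M → ℝ → ℝ≥0∞}

theorem lintegral_verticalSq_rpow_le
    (hball : ∀ x r, 0 < r → 0 < μ (ball x r) ∧ μ (ball x r) < ∞) {K : ℝ≥0∞}
    (hK : ∀ x r, 0 < r → μ (ball x (5 * r)) ≤ K * μ (ball x r)) {p : ℝ} (hp0 : 0 < p)
    (hp2 : p < 2) (hF : Measurable (Function.uncurry F)) :
    ∫⁻ x, (verticalSq F x ^ ((1 : ℝ) / 2)) ^ p ∂μ
      ≤ (2 * K + 2 * ENNReal.ofReal (p / (2 - p)))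
        * ∫⁻ x, (conicalSq μ F x ^ ((1 : ℝ) / 2)) ^ p ∂μ := by
  have hsq : ∀ c : ℝ≥0∞, (c ^ ((1 : ℝ) / 2)) ^ 2 = c := fun c => by
    rw [← ENNReal.rpow_two, one_div, ENNReal.rpow_inv_rpow two_ne_zero]
  have ha := (measurable_conicalSq (μ := μ) hF).pow_const ((1 : ℝ) / 2)
  refine lintegral_rpow_le_of_forall_exists_good_set hp0 hp2
    ((measurable_verticalSq hF).pow_const _) ha _ _ fun l _ => ?_
  have hS : MeasurableSet {x | ENNReal.ofReal l < conicalSq μ F x ^ ((1 : ℝ) / 2)} :=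
    measurableSet_lt measurable_const ha
  refine ⟨halfDenseSet μ _, measure_halfDenseSet_le hK hS, ?_⟩
  have hcompl : {x | ENNReal.ofReal l < conicalSq μ F x ^ ((1 : ℝ) / 2)}ᶜ
      = {x | conicalSq μ F x ^ ((1 : ℝ) / 2) ≤ ENNReal.ofReal l} := by
    ext x; simp [not_lt]
  simp only [hsq, ← hcompl]
  exact setLIntegral_compl_halfDenseSet_verticalSq_le hball hF hS

end Conclusion

theorem stmt_1_general
    {M : Type*} [MetricSpace M] [MeasurableSpace M] [BorelSpace M]
    [SecondCountableTopology M]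
    (μ : Measure M)
    (hball : ∀ (x : M) (r : ℝ), 0 < r → 0 < μ (ball x r) ∧ μ (ball x r) < ⊤)
    (C₀ N : ℝ) (hC₀ : 1 ≤ C₀)
    (hD : ∀ (x : M) (r l : ℝ), 0 < r → 1 ≤ l →
      μ (ball x (l * r)) ≤ ENNReal.ofReal (C₀ * l ^ N) * μ (ball x r))
    (p : ℝ) (hp0 : 0 < p) (hp2 : p ≤ 2) :
    ∃ C : ℝ, 0 < C ∧
      ∀ F : M → ℝ → ℝ≥0∞, Measurable (Function.uncurry F) →
        (∫⁻ x, ((∫⁻ t in Ioi (0:ℝ),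
              (F x t) ^ 2 / ENNReal.ofReal t) ^ ((1:ℝ)/2)) ^ p ∂μ) ^ (1/p)
          ≤ ENNReal.ofReal C *
            (∫⁻ x, ((∫⁻ t in Ioi (0:ℝ), ∫⁻ y in ball x t,
              (F y t) ^ 2 / (ENNReal.ofReal t * μ (ball y t)) ∂μ) ^ ((1:ℝ)/2)) ^ p ∂μ)
            ^ (1/p) := by
  have : IsLocallyFiniteMeasure μ :=
    ⟨fun x => ⟨ball x 1, ball_mem_nhds x one_pos, (hball x 1 one_pos).2⟩⟩
  rcases hp2.lt_or_eq with hp2 | rfl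
  · have h5N : 0 < C₀ * 5 ^ N := by positivity
    have hp : 0 < p / (2 - p) := div_pos hp0 (by linarith)
    set c := 2 * (C₀ * 5 ^ N) + 2 * (p / (2 - p))
    have hc : 0 < c := by positivity
    refine ⟨c ^ (1 / p), Real.rpow_pos_of_pos hc _, fun F hF => ?_⟩
    have hK := lintegral_verticalSq_rpow_le hball (fun x r hr => hD x r 5 hr (by norm_num))
      hp0 hp2 hF
    rw [← ofReal_ofNat 2, ← ENNReal.ofReal_mul zero_le_two, ← ENNReal.ofReal_mul zero_le_two,
      ← ENNReal.ofReal_add (by positivity) (by positivity)] at hK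
    calc _ ≤ (ENNReal.ofReal c * ∫⁻ x, (conicalSq μ F x ^ ((1 : ℝ) / 2)) ^ p ∂μ) ^ (1 / p) :=
          ENNReal.rpow_le_rpow hK (by positivity)
      _ = _ := by
          rw [ENNReal.mul_rpow_of_nonneg _ _ (by positivity), ENNReal.ofReal_rpow_of_pos hc]
          rfl
  · refine ⟨1, one_pos, fun F hF => ?_⟩
    simp only [one_div, ENNReal.rpow_inv_rpow two_ne_zero, ofReal_one, one_mul]
    exact le_of_eq (congrArg (· ^ (2 : ℝ)⁻¹) (lintegral_verticalSq_eq_lintegral_conicalSq hball hF))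

/-- Let `p ∈ (0,2]`. If `(M,d,μ)` satisfies (D') with constants
`C₀ ≥ 1` and `N > 0`, then there is a constant `C`, depending only on `p`, `C₀`, `N`,
such that for every measurable `F : M × (0,∞) → [0,∞]` one has
`‖Ṽ(F)‖_{L^p(μ)} ≤ C ‖A(F)‖_{L^p(μ)}`. -/
theorem stmt_1
    {M : Type*} [MetricSpace M] [MeasurableSpace M] [BorelSpace M]
    [SecondCountableTopology M]
    (μ : Measure M)
    (hball : ∀ (x : M) (r : ℝ), 0 < r → 0 < μ (ball x r) ∧ μ (ball x r) < ⊤)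
    (C₀ N : ℝ) (hC₀ : 1 ≤ C₀) (hN : 0 < N)
    (hD : ∀ (x : M) (r l : ℝ), 0 < r → 1 ≤ l →
      μ (ball x (l * r)) ≤ ENNReal.ofReal (C₀ * l ^ N) * μ (ball x r))
    (p : ℝ) (hp0 : 0 < p) (hp2 : p ≤ 2) :
    ∃ C : ℝ, 0 < C ∧
      ∀ F : M → ℝ → ℝ≥0∞, Measurable (Function.uncurry F) →
        (∫⁻ x, ((∫⁻ t in Ioi (0:ℝ),
              (F x t) ^ 2 / ENNReal.ofReal t) ^ ((1:ℝ)/2)) ^ p ∂μ) ^ (1/p)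
          ≤ ENNReal.ofReal C *
            (∫⁻ x, ((∫⁻ t in Ioi (0:ℝ), ∫⁻ y in ball x t,
              (F y t) ^ 2 / (ENNReal.ofReal t * μ (ball y t)) ∂μ) ^ ((1:ℝ)/2)) ^ p ∂μ)
            ^ (1/p) :=
  stmt_1_general μ hball C₀ N hC₀ hD p hp0 hp2
end

section
/- Let p ∈ (1,∞) and p' = p/(p−1). For all measurable functions u, v : M × (0,∞) → [0,∞] one has ∫₀^∞ ∫_M u(x,t) v(x,t) dμ(x) dt ≤ ‖𝒜(u)‖_{L^p(μ)} · ‖𝒜(v)‖_{L^{p'}(μ)}. -/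
/-!
Integrating the cone average `∫∫_{d(x,y) < √t} g(x,t) dμ(x) dt / μ(B(x,√t))` over `y ∈ M`
gives back `∫∫ g dμ dt`: by Tonelli, each `(x, t)` is counted with weight
`μ{y : d(x,y) < √t} = μ(B(x,√t))`, which cancels the normalisation. For `g = uv`, Cauchy–Schwarz on each cone bounds the cone average
by `𝒜(u)(y) 𝒜(v)(y)`, and Hölder's inequality in `y` concludes.
-/

open MeasureTheory Metric Set ENNReal Function

theorem ENNReal.lintegral_mul_div_le {α : Type*} [MeasurableSpace α] (κ : Measure α)
    {u v m : α → ℝ≥0∞} (hu : AEMeasurable u κ) (hv : AEMeasurable v κ)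
    (hm : AEMeasurable m κ) :
    ∫⁻ a, u a * v a / m a ∂κ
      ≤ (∫⁻ a, u a ^ 2 / m a ∂κ) ^ (1 / 2 : ℝ) * (∫⁻ a, v a ^ 2 / m a ∂κ) ^ (1 / 2 : ℝ) := by
  -- Cauchy–Schwarz for the measure `κ.withDensity m⁻¹`.
  have h_weighted : ∀ f : α → ℝ≥0∞, AEMeasurable f κ →
      ∫⁻ a, f a / m a ∂κ = ∫⁻ a, f a ∂κ.withDensity m⁻¹ := fun f hf => by
    rw [lintegral_withDensity_eq_lintegral_mul₀ hm.inv hf]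
    simp only [Pi.mul_apply, Pi.inv_apply, div_eq_mul_inv, mul_comm]
  have hκ := withDensity_absolutelyContinuous κ m⁻¹
  rw [h_weighted (fun a => u a * v a) (hu.mul hv), h_weighted (fun a => u a ^ 2) (hu.pow_const 2),
    h_weighted (fun a => v a ^ 2) (hv.pow_const 2)]
  simpa only [Pi.mul_apply, ENNReal.rpow_two] using
    ENNReal.lintegral_mul_le_Lp_mul_Lq _ Real.HolderConjugate.two_two (hu.mono' hκ) (hv.mono' hκ)

section ConeIntegral

variable {M T : Type*} [PseudoMetricSpace M] [MeasurableSpace M] [OpensMeasurableSpace M]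
  [SecondCountableTopology M] [MeasurableSpace T]

theorem measurable_setLIntegral_ball_s3 {α : Type*} [MeasurableSpace α] (μ : Measure M) [SFinite μ]
    {c : α → M} {ρ : α → ℝ} {g : α → M → ℝ≥0∞} (hc : Measurable c) (hρ : Measurable ρ)
    (hg : Measurable (uncurry g)) :
    Measurable fun a => ∫⁻ x in ball (c a) (ρ a), g a x ∂μ := by
  have hS : MeasurableSet {p : α × M | dist p.2 (c p.1) < ρ p.1} :=
    measurableSet_lt (measurable_snd.dist (hc.comp measurable_fst)) (hρ.comp measurable_fst)
  simp_rw [← lintegral_indicator measurableSet_ball]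
  exact (hg.indicator hS).lintegral_prod_right'

theorem measurable_measure_ball_s3 (μ : Measure M) [SFinite μ] {r : T → ℝ} (hr : Measurable r) :
    Measurable fun p : M × T => μ (ball p.1 (r p.2)) := by
  simp_rw [← setLIntegral_one]
  exact measurable_setLIntegral_ball_s3 μ (g := fun _ _ => 1) measurable_fst (hr.comp measurable_snd)
    measurable_const

theorem lintegral_setLIntegral_ball_eq_setLIntegral_prod (μ : Measure M) [SFinite μ]
    (ν : Measure T) {r : T → ℝ} (hr : Measurable r) {f : M → T → ℝ≥0∞}
    (hf : Measurable (uncurry f)) (y : M) :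
    ∫⁻ t, ∫⁻ x in ball y (r t), f x t ∂μ ∂ν
      = ∫⁻ q in {q : T × M | dist q.2 y < r q.1}, f q.2 q.1 ∂ν.prod μ := by
  have hS : MeasurableSet {q : T × M | dist q.2 y < r q.1} :=
    measurableSet_lt (measurable_snd.dist measurable_const) (hr.comp measurable_fst)
  rw [← lintegral_indicator hS,
    lintegral_prod _ (by exact ((hf.comp measurable_swap).indicator hS).aemeasurable)]
  refine lintegral_congr fun t => ?_
  rw [← lintegral_indicator measurableSet_ball]
  rfl

theorem lintegral_setLIntegral_ball_swap (μ : Measure M) [SFinite μ] {g : M → ℝ≥0∞}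
    (hg : Measurable g) (ρ : ℝ) :
    ∫⁻ y, ∫⁻ x in ball y ρ, g x ∂μ ∂μ = ∫⁻ x, g x * μ (ball x ρ) ∂μ := by
  have hS : MeasurableSet {p : M × M | dist p.1 p.2 < ρ} :=
    measurableSet_lt measurable_dist measurable_const
  calc ∫⁻ y, ∫⁻ x in ball y ρ, g x ∂μ ∂μ
      = ∫⁻ y, ∫⁻ x, (ball x ρ).indicator (fun _ => g x) y ∂μ ∂μ := by
        refine lintegral_congr fun y => ?_
        rw [← lintegral_indicator measurableSet_ball]
        refine lintegral_congr fun x => ?_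
        classical
        rw [indicator_apply, indicator_apply, mem_ball_comm]
    _ = ∫⁻ x, ∫⁻ y, (ball x ρ).indicator (fun _ => g x) y ∂μ ∂μ :=
        lintegral_lintegral_swap ((hg.comp measurable_snd).indicator hS).aemeasurable
    _ = ∫⁻ x, g x * μ (ball x ρ) ∂μ := by
        simp_rw [lintegral_indicator_const measurableSet_ball]

/-- With `ν = dt` on `(0, ∞)` and `r = √·`, the paper's `𝒜(w)(y)` is
`coneIntegral μ ν r (w ^ 2) y ^ (1 / 2)`. -/
noncomputable def coneIntegral (μ : Measure M) (ν : Measure T) (r : T → ℝ) (g : M → T → ℝ≥0∞)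
    (y : M) : ℝ≥0∞ :=
  ∫⁻ t, ∫⁻ x in ball y (r t), g x t / μ (ball x (r t)) ∂μ ∂ν

variable (μ : Measure M) [SFinite μ] (ν : Measure T) {r : T → ℝ}

theorem measurable_setLIntegral_ball_div_measure_ball (hr : Measurable r) {g : M → T → ℝ≥0∞}
    (hg : Measurable (uncurry g)) :
    Measurable fun p : M × T => ∫⁻ x in ball p.1 (r p.2), g x p.2 / μ (ball x (r p.2)) ∂μ :=
  measurable_setLIntegral_ball_s3 μ (g := fun (p : M × T) x => g x p.2 / μ (ball x (r p.2)))
    measurable_fst (hr.comp measurable_snd)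
    (by exact
      (hg.div (measurable_measure_ball_s3 μ hr)).comp (measurable_snd.prodMk measurable_fst.snd))

theorem measurable_coneIntegral [SFinite ν] (hr : Measurable r) {g : M → T → ℝ≥0∞}
    (hg : Measurable (uncurry g)) : Measurable (coneIntegral μ ν r g) :=
  (measurable_setLIntegral_ball_div_measure_ball μ hr hg).lintegral_prod_right'

theorem lintegral_coneIntegral [SFinite ν]
    (hball : ∀ (x : M) (ρ : ℝ), 0 < ρ → 0 < μ (ball x ρ) ∧ μ (ball x ρ) < ⊤)
    (hr : Measurable r) (hr_pos : ∀ᵐ t ∂ν, 0 < r t) {g : M → T → ℝ≥0∞}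
    (hg : Measurable (uncurry g)) :
    ∫⁻ y, coneIntegral μ ν r g y ∂μ = ∫⁻ t, ∫⁻ x, g x t ∂μ ∂ν := by
  have hdiv := hg.div (measurable_measure_ball_s3 μ hr)
  calc ∫⁻ y, coneIntegral μ ν r g y ∂μ
      = ∫⁻ t, ∫⁻ y, ∫⁻ x in ball y (r t), g x t / μ (ball x (r t)) ∂μ ∂μ ∂ν :=
        lintegral_lintegral_swap
          (measurable_setLIntegral_ball_div_measure_ball μ hr hg).aemeasurable
    _ = ∫⁻ t, ∫⁻ x, g x t / μ (ball x (r t)) * μ (ball x (r t)) ∂μ ∂ν :=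
        lintegral_congr fun t =>
          lintegral_setLIntegral_ball_swap μ (by exact hdiv.comp measurable_prodMk_right) (r t)
    _ = ∫⁻ t, ∫⁻ x, g x t ∂μ ∂ν :=
        lintegral_congr_ae <| hr_pos.mono fun t ht => lintegral_congr fun x =>
          ENNReal.div_mul_cancel (hball x _ ht).1.ne' (hball x _ ht).2.ne

theorem coneIntegral_mul_le (hr : Measurable r) {u v : M → T → ℝ≥0∞}
    (hu : Measurable (uncurry u)) (hv : Measurable (uncurry v)) (y : M) :
    coneIntegral μ ν r (fun x t => u x t * v x t) y
      ≤ coneIntegral μ ν r (fun x t => u x t ^ 2) y ^ (1 / 2 : ℝ)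
        * coneIntegral μ ν r (fun x t => v x t ^ 2) y ^ (1 / 2 : ℝ) := by
  have hm := measurable_measure_ball_s3 μ hr
  simp only [coneIntegral]
  rw [lintegral_setLIntegral_ball_eq_setLIntegral_prod μ ν hr
      (f := fun x t => u x t * v x t / μ (ball x (r t))) (by exact (hu.mul hv).div hm),
    lintegral_setLIntegral_ball_eq_setLIntegral_prod μ ν hr
      (f := fun x t => u x t ^ 2 / μ (ball x (r t))) (by exact (hu.pow_const 2).div hm),
    lintegral_setLIntegral_ball_eq_setLIntegral_prod μ ν hr
      (f := fun x t => v x t ^ 2 / μ (ball x (r t))) (by exact (hv.pow_const 2).div hm)]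
  exact ENNReal.lintegral_mul_div_le _ (u := fun q : T × M => u q.2 q.1)
    (v := fun q : T × M => v q.2 q.1) (m := fun q : T × M => μ (ball q.2 (r q.1)))
    (hu.comp measurable_swap).aemeasurable
    (hv.comp measurable_swap).aemeasurable (hm.comp measurable_swap).aemeasurable

end ConeIntegral

/-- Let `p ∈ (1,∞)` and `p' = p/(p−1)`. For all measurable
`u, v : M × (0,∞) → [0,∞]` one has
`∫₀^∞ ∫_M u v dμ dt ≤ ‖𝒜(u)‖_{L^p(μ)} ‖𝒜(v)‖_{L^{p'}(μ)}`, where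
`𝒜(w)(y) = (∫₀^∞ ∫_{B(y,√t)} w(x,t)² dμ(x) dt/μ(B(x,√t)))^{1/2}`. -/
theorem stmt_3
    {M : Type*} [MetricSpace M] [MeasurableSpace M] [BorelSpace M]
    [SecondCountableTopology M]
    (μ : Measure M)
    (hball : ∀ (x : M) (r : ℝ), 0 < r → 0 < μ (ball x r) ∧ μ (ball x r) < ⊤)
    (p : ℝ) (hp : 1 < p)
    (u v : M → ℝ → ℝ≥0∞)
    (hu : Measurable (Function.uncurry u)) (hv : Measurable (Function.uncurry v)) :
    ∫⁻ t in Ioi (0:ℝ), (∫⁻ x, u x t * v x t ∂μ)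
      ≤ (∫⁻ y, ((∫⁻ t in Ioi (0:ℝ), ∫⁻ x in ball y (Real.sqrt t),
            (u x t) ^ 2 / μ (ball x (Real.sqrt t)) ∂μ) ^ ((1:ℝ)/2)) ^ p ∂μ) ^ (1/p)
        * (∫⁻ y, ((∫⁻ t in Ioi (0:ℝ), ∫⁻ x in ball y (Real.sqrt t),
            (v x t) ^ 2 / μ (ball x (Real.sqrt t)) ∂μ) ^ ((1:ℝ)/2)) ^ (p/(p-1)) ∂μ)
          ^ (1/(p/(p-1))) := by
  have : IsLocallyFiniteMeasure μ :=
    ⟨fun x => ⟨ball x 1, ball_mem_nhds x one_pos, (hball x 1 one_pos).2⟩⟩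
  set ν := (volume : Measure ℝ).restrict (Ioi 0)
  have hsqrt_pos : ∀ᵐ t ∂ν, 0 < Real.sqrt t :=
    (ae_restrict_mem measurableSet_Ioi).mono fun t ht => Real.sqrt_pos.2 ht
  have hA : ∀ w : M → ℝ → ℝ≥0∞, Measurable (uncurry w) → AEMeasurable
      (fun y => coneIntegral μ ν Real.sqrt (fun x t => w x t ^ 2) y ^ (1 / 2 : ℝ)) μ :=
    fun w hw => ((measurable_coneIntegral μ ν Real.continuous_sqrt.measurable
      (by exact hw.pow_const 2)).pow_const _).aemeasurable
  calc ∫⁻ t in Ioi (0:ℝ), (∫⁻ x, u x t * v x t ∂μ)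
      = ∫⁻ y, coneIntegral μ ν Real.sqrt (fun x t => u x t * v x t) y ∂μ :=
        (lintegral_coneIntegral μ ν hball Real.continuous_sqrt.measurable hsqrt_pos
          (by exact hu.mul hv)).symm
    _ ≤ ∫⁻ y, coneIntegral μ ν Real.sqrt (fun x t => u x t ^ 2) y ^ (1 / 2 : ℝ)
          * coneIntegral μ ν Real.sqrt (fun x t => v x t ^ 2) y ^ (1 / 2 : ℝ) ∂μ :=
        lintegral_mono fun y => coneIntegral_mul_le μ ν Real.continuous_sqrt.measurable hu hv y
    _ ≤ _ := ENNReal.lintegral_mul_le_Lp_mul_Lq μ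
        ((Real.holderConjugate_iff_eq_conjExponent hp).2 rfl) (hA u hu) (hA v hv)
end
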